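/- Let Λ₀ be a nonempty compact subset of S^m and f : Λ₀ → ℝ a 1-Lipschitz function. Suppose there exists x₀ ∈ Λ₀ with −x₀ ∈ Λ₀ and f(x₀) = f(−x₀) + π (the purely lightlike case). Then for every x ∈ S^m one has f⁻(x) = f⁺(x) = f(x₀) − d(x₀, x) = f(−x₀) + d(−x₀, x); in particular the set {(θ,x) : f⁻(x) < θ < f⁺(x)} is empty. -/

import Mathlib

/-!
Since `d(x₀, y) + d(y, −x₀) = π`, the Lipschitz bounds `f x₀ − f y ≤ d(x₀, y)` and
`f y − f (−x₀) ≤ d(y, −x₀)` add up to the equality `f x₀ − f (−x₀) = π`, so both are equalities: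
on `Λ₀`, `f = f x₀ − d(x₀, ·) = f (−x₀) + d(−x₀, ·)`. By the spherical triangle inequality the
supremum defining `f⁻` is then attained at `x₀` and the infimum defining `f⁺` at `−x₀`.
-/

open scoped RealInnerProductSpace
open Real

noncomputable def sphDist {m : ℕ} (x y : EuclideanSpace ℝ (Fin m)) : ℝ :=
  Real.arccos ⟪x, y⟫

noncomputable def fminus {m : ℕ} (Λ₀ : Set (EuclideanSpace ℝ (Fin m)))
    (f : EuclideanSpace ℝ (Fin m) → ℝ) (x : EuclideanSpace ℝ (Fin m)) : ℝ :=
  sSup ((fun y => f y - sphDist x y) '' Λ₀)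

noncomputable def fplus {m : ℕ} (Λ₀ : Set (EuclideanSpace ℝ (Fin m)))
    (f : EuclideanSpace ℝ (Fin m) → ℝ) (x : EuclideanSpace ℝ (Fin m)) : ℝ :=
  sInf ((fun y => f y + sphDist x y) '' Λ₀)

open InnerProductGeometry

section SphericalEnvelopes

variable {m : ℕ}

lemma sphDist_comm (x y : EuclideanSpace ℝ (Fin m)) : sphDist x y = sphDist y x := by
  rw [sphDist, sphDist, real_inner_comm]

lemma sphDist_neg_left (x y : EuclideanSpace ℝ (Fin m)) :
    sphDist (-x) y = π - sphDist x y := by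
  rw [sphDist, sphDist, inner_neg_left, arccos_neg]

lemma sphDist_neg_right (x y : EuclideanSpace ℝ (Fin m)) :
    sphDist x (-y) = π - sphDist x y := by
  rw [sphDist_comm, sphDist_neg_left, sphDist_comm]

lemma sphDist_eq_angle {x y : EuclideanSpace ℝ (Fin m)} (hx : ‖x‖ = 1) (hy : ‖y‖ = 1) :
    sphDist x y = angle x y := by
  rw [sphDist, angle, hx, hy, mul_one, div_one]

lemma sphDist_self {x : EuclideanSpace ℝ (Fin m)} (hx : ‖x‖ = 1) : sphDist x x = 0 := by
  rw [sphDist_eq_angle hx hx, angle_self (norm_ne_zero_iff.mp (by simp [hx]))]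

lemma sphDist_triangle {x y z : EuclideanSpace ℝ (Fin m)}
    (hx : ‖x‖ = 1) (hy : ‖y‖ = 1) (hz : ‖z‖ = 1) :
    sphDist x z ≤ sphDist x y + sphDist y z := by
  rw [sphDist_eq_angle hx hy, sphDist_eq_angle hy hz, sphDist_eq_angle hx hz]
  exact angle_le_angle_add_angle x y z

variable {Λ₀ : Set (EuclideanSpace ℝ (Fin m))} {f : EuclideanSpace ℝ (Fin m) → ℝ}
  {x x₀ : EuclideanSpace ℝ (Fin m)} {c : ℝ}

lemma eq_sub_sphDist_of_antipodal (hf : ∀ y ∈ Λ₀, ∀ z ∈ Λ₀, |f y - f z| ≤ sphDist y z)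
    (hx₀ : x₀ ∈ Λ₀) (hx₀' : -x₀ ∈ Λ₀) (hl : f x₀ = f (-x₀) + π) :
    ∀ y ∈ Λ₀, f y = f x₀ - sphDist x₀ y := by
  intro y hy
  have h₁ : f x₀ - f y ≤ sphDist x₀ y := le_of_abs_le (hf x₀ hx₀ y hy)
  have h₂ : f y - f (-x₀) ≤ sphDist y (-x₀) := le_of_abs_le (hf y hy (-x₀) hx₀')
  rw [sphDist_neg_right, sphDist_comm y x₀] at h₂
  linarith

lemma fminus_eq_of_eqOn_sub_sphDist (hsub : ∀ y ∈ Λ₀, ‖y‖ = 1) (hx₀ : x₀ ∈ Λ₀)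
    (hfx : ∀ y ∈ Λ₀, f y = c - sphDist x₀ y) (hx : ‖x‖ = 1) :
    fminus Λ₀ f x = c - sphDist x₀ x := by
  refine IsGreatest.csSup_eq ⟨⟨x₀, hx₀, ?_⟩, ?_⟩
  · dsimp only
    rw [hfx x₀ hx₀, sphDist_self (hsub x₀ hx₀), sphDist_comm]
    ring
  · rintro _ ⟨y, hy, rfl⟩
    have := sphDist_triangle (hsub x₀ hx₀) (hsub y hy) hx
    dsimp only
    rw [hfx y hy, sphDist_comm x y]
    linarith

lemma fplus_eq_of_eqOn_add_sphDist (hsub : ∀ y ∈ Λ₀, ‖y‖ = 1) (hx₀ : x₀ ∈ Λ₀)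
    (hfx : ∀ y ∈ Λ₀, f y = c + sphDist x₀ y) (hx : ‖x‖ = 1) :
    fplus Λ₀ f x = c + sphDist x₀ x := by
  refine IsLeast.csInf_eq ⟨⟨x₀, hx₀, ?_⟩, ?_⟩
  · dsimp only
    rw [hfx x₀ hx₀, sphDist_self (hsub x₀ hx₀), sphDist_comm]
    ring
  · rintro _ ⟨y, hy, rfl⟩
    have := sphDist_triangle (hsub x₀ hx₀) (hsub y hy) hx
    dsimp only
    rw [hfx y hy, sphDist_comm x y]
    linarith

end SphericalEnvelopes

theorem stmt6_general (m : ℕ) (Λ₀ : Set (EuclideanSpace ℝ (Fin (m + 1))))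
    (hsub : ∀ y ∈ Λ₀, ‖y‖ = 1)
    (f : EuclideanSpace ℝ (Fin (m + 1)) → ℝ)
    (hf : ∀ y ∈ Λ₀, ∀ z ∈ Λ₀, |f y - f z| ≤ sphDist y z)
    (x₀ : EuclideanSpace ℝ (Fin (m + 1))) (hx₀ : x₀ ∈ Λ₀) (hx₀' : -x₀ ∈ Λ₀)
    (hl : f x₀ = f (-x₀) + π) :
    (∀ x : EuclideanSpace ℝ (Fin (m + 1)), ‖x‖ = 1 →
      fminus Λ₀ f x = f x₀ - sphDist x₀ x ∧
      fplus Λ₀ f x = f x₀ - sphDist x₀ x ∧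
      fplus Λ₀ f x = f (-x₀) + sphDist (-x₀) x) ∧
    {p : ℝ × EuclideanSpace ℝ (Fin (m + 1)) |
      ‖p.2‖ = 1 ∧ fminus Λ₀ f p.2 < p.1 ∧ p.1 < fplus Λ₀ f p.2} = ∅ := by
  have hcones : ∀ x, f x₀ - sphDist x₀ x = f (-x₀) + sphDist (-x₀) x := fun x => by
    rw [sphDist_neg_left, hl]
    ring
  have hf_sub := eq_sub_sphDist_of_antipodal hf hx₀ hx₀' hl
  have hf_add : ∀ y ∈ Λ₀, f y = f (-x₀) + sphDist (-x₀) y := fun y hy =>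
    (hf_sub y hy).trans (hcones y)
  have hmain : ∀ x : EuclideanSpace ℝ (Fin (m + 1)), ‖x‖ = 1 →
      fminus Λ₀ f x = f x₀ - sphDist x₀ x ∧
      fplus Λ₀ f x = f x₀ - sphDist x₀ x ∧
      fplus Λ₀ f x = f (-x₀) + sphDist (-x₀) x := fun x hx => by
    have hplus := fplus_eq_of_eqOn_add_sphDist hsub hx₀' hf_add hx
    exact ⟨fminus_eq_of_eqOn_sub_sphDist hsub hx₀ hf_sub hx, hplus.trans (hcones x).symm,
      hplus⟩
  refine ⟨hmain, Set.eq_empty_of_forall_notMem ?_⟩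
  rintro ⟨θ, x⟩ ⟨hx, hlow, hupp⟩
  obtain ⟨hm, hp, -⟩ := hmain x hx
  linarith

/-- In the purely lightlike case (`x₀, −x₀ ∈ Λ₀` with `f(x₀) = f(−x₀) + π`),
one has `f⁻ = f⁺ = f(x₀) − d(x₀,·) = f(−x₀) + d(−x₀,·)` on `S^m`; in particular
the region `{(θ,x) : f⁻(x) < θ < f⁺(x)}` is empty. -/
theorem stmt6 (m : ℕ) (Λ₀ : Set (EuclideanSpace ℝ (Fin (m + 1))))
    (hsub : ∀ y ∈ Λ₀, ‖y‖ = 1) (hne : Λ₀.Nonempty) (hcpt : IsCompact Λ₀)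
    (f : EuclideanSpace ℝ (Fin (m + 1)) → ℝ)
    (hf : ∀ y ∈ Λ₀, ∀ z ∈ Λ₀, |f y - f z| ≤ sphDist y z)
    (x₀ : EuclideanSpace ℝ (Fin (m + 1))) (hx₀ : x₀ ∈ Λ₀) (hx₀' : -x₀ ∈ Λ₀)
    (hl : f x₀ = f (-x₀) + π) :
    (∀ x : EuclideanSpace ℝ (Fin (m + 1)), ‖x‖ = 1 →
      fminus Λ₀ f x = f x₀ - sphDist x₀ x ∧
      fplus Λ₀ f x = f x₀ - sphDist x₀ x ∧
      fplus Λ₀ f x = f (-x₀) + sphDist (-x₀) x) ∧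
    {p : ℝ × EuclideanSpace ℝ (Fin (m + 1)) |
      ‖p.2‖ = 1 ∧ fminus Λ₀ f p.2 < p.1 ∧ p.1 < fplus Λ₀ f p.2} = ∅ :=
  stmt6_general m Λ₀ hsub f hf x₀ hx₀ hx₀' hl
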